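/- arXiv:2512.24759 — 4 statements merged into one kernel-verified Lean document; each statement's English description precedes it below -/
import Mathlib

section
/- Let d, n be positive integers, let A be a symmetric real d×d matrix, a ∈ ℝ^d, and define the quadratic loss L(w) = wᵀAw + aᵀw for w ∈ ℝ^d. For every w ∈ ℝ^d, every real n×d matrix R, and every binary vector z ∈ {0,1}^n, one has L(w + Rᵀz) = zᵀ Q(w,R) z + L(w), where Q(w,R) = R A Rᵀ + diag[R(2Aw + a)] and diag[x] denotes the diagonal matrix with the entries of the vector x on its diagonal. -/
open Matrix

/-- For the quadratic loss `L(w) = wᵀAw + aᵀw` (`A` symmetric), any `w`,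
any `n × d` matrix `R` and any binary vector `z ∈ {0,1}ⁿ`,
`L(w + Rᵀz) = zᵀ Q(w,R) z + L(w)` where `Q(w,R) = R A Rᵀ + diag[R(2Aw + a)]`. -/
theorem qcqo_qubo_identity (d n : ℕ) (hd : 0 < d) (hn : 0 < n)
    (A : Matrix (Fin d) (Fin d) ℝ) (hA : A.IsSymm) (a : Fin d → ℝ)
    (L : (Fin d → ℝ) → ℝ)
    (hL : ∀ w, L w = w ⬝ᵥ A.mulVec w + a ⬝ᵥ w)
    (w : Fin d → ℝ) (R : Matrix (Fin n) (Fin d) ℝ)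
    (Q : Matrix (Fin n) (Fin n) ℝ)
    (hQ : Q = R * A * Rᵀ + Matrix.diagonal (R.mulVec ((2 : ℝ) • A.mulVec w + a)))
    (z : Fin n → ℝ) (hz : ∀ i, z i = 0 ∨ z i = 1) :
    L (w + Rᵀ.mulVec z) = z ⬝ᵥ Q.mulVec z + L w := by
  set u := Rᵀ.mulVec z with hu
  -- cross term symmetry
  have hsym : w ⬝ᵥ A.mulVec u = u ⬝ᵥ A.mulVec w := by
    rw [Matrix.dotProduct_mulVec, ← Matrix.mulVec_transpose, hA.eq, dotProduct_comm]
  -- pull z through R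
  have hpull : ∀ v : Fin d → ℝ, z ⬝ᵥ R.mulVec v = u ⬝ᵥ v := by
    intro v
    rw [Matrix.dotProduct_mulVec, hu, Matrix.mulVec_transpose]
  -- diagonal term
  have hdiag : ∀ x : Fin n → ℝ,
      z ⬝ᵥ (Matrix.diagonal x).mulVec z = z ⬝ᵥ x := by
    intro x
    simp only [dotProduct, Matrix.mulVec_diagonal]
    refine Finset.sum_congr rfl fun i _ => ?_
    rcases hz i with h | h <;> simp [h]
  have hquad : z ⬝ᵥ (R * A * Rᵀ).mulVec z = u ⬝ᵥ A.mulVec u := by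
    rw [← Matrix.mulVec_mulVec, ← Matrix.mulVec_mulVec, hpull, hu]
  rw [hQ, Matrix.add_mulVec, dotProduct_add, hquad, hdiag, hpull, hL, hL,
    Matrix.mulVec_add, dotProduct_add, add_dotProduct, dotProduct_add, dotProduct_add]
  simp only [add_dotProduct, dotProduct_smul, smul_eq_mul]
  linarith [hsym, dotProduct_comm a u]
end

section
/- Let d, n be positive integers, A a symmetric real d×d matrix, a ∈ ℝ^d, L(w) = wᵀAw + aᵀw, and Q(w,R) = R A Rᵀ + diag[R(2Aw + a)] for an n×d real matrix R. If z* ∈ {0,1}^n minimizes the energy E(z) = zᵀ Q(w,R) z over all binary vectors z ∈ {0,1}^n, then L(w + Rᵀz*) ≤ L(w). -/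
open Matrix

/-- If `z*` minimizes the QUBO energy `zᵀ Q(w,R) z` over binary vectors
`z ∈ {0,1}ⁿ`, where `Q(w,R) = R A Rᵀ + diag[R(2Aw + a)]`, then the QCQO update does not
increase the quadratic loss `L(w) = wᵀAw + aᵀw`: `L(w + Rᵀz*) ≤ L(w)`. -/
theorem qcqo_update_no_increase (d n : ℕ) (hd : 0 < d) (hn : 0 < n)
    (A : Matrix (Fin d) (Fin d) ℝ) (hA : A.IsSymm) (a : Fin d → ℝ)
    (L : (Fin d → ℝ) → ℝ)
    (hL : ∀ w, L w = w ⬝ᵥ A.mulVec w + a ⬝ᵥ w)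
    (w : Fin d → ℝ) (R : Matrix (Fin n) (Fin d) ℝ)
    (Q : Matrix (Fin n) (Fin n) ℝ)
    (hQ : Q = R * A * Rᵀ + Matrix.diagonal (R.mulVec ((2 : ℝ) • A.mulVec w + a)))
    (zs : Fin n → ℝ) (hzs : ∀ i, zs i = 0 ∨ zs i = 1)
    (hmin : ∀ z : Fin n → ℝ, (∀ i, z i = 0 ∨ z i = 1) →
      zs ⬝ᵥ Q.mulVec zs ≤ z ⬝ᵥ Q.mulVec z) :
    L (w + Rᵀ.mulVec zs) ≤ L w := by
  -- E(zs) ≤ E(0) = 0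
  have h0 : zs ⬝ᵥ Q.mulVec zs ≤ 0 := by
    have := hmin (fun _ => 0) (fun i => Or.inl rfl)
    simpa using this
  set u := Rᵀ.mulVec zs with hu
  -- symmetry consequence
  have hsym : ∀ x y : Fin d → ℝ, x ⬝ᵥ A.mulVec y = y ⬝ᵥ A.mulVec x := by
    intro x y
    rw [dotProduct_mulVec, ← mulVec_transpose, hA.eq, dotProduct_comm]
  -- diagonal part: zsᵀ diag(v) zs = zs ⬝ᵥ v
  have hdiag : ∀ v : Fin n → ℝ,
      zs ⬝ᵥ (Matrix.diagonal v).mulVec zs = zs ⬝ᵥ v := by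
    intro v
    simp only [mulVec_diagonal, dotProduct]
    refine Finset.sum_congr rfl fun i _ => ?_
    rcases hzs i with h | h <;> simp [h]
  have hRu : ∀ x : Fin d → ℝ, zs ⬝ᵥ R.mulVec x = u ⬝ᵥ x := by
    intro x
    rw [dotProduct_mulVec, hu, mulVec_transpose]
  have hquad : zs ⬝ᵥ (R * A * Rᵀ).mulVec zs = u ⬝ᵥ A.mulVec u := by
    rw [← Matrix.mulVec_mulVec, ← Matrix.mulVec_mulVec, hRu, ← hu]
  have key : zs ⬝ᵥ Q.mulVec zs = L (w + u) - L w := by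
    rw [hQ, add_mulVec, dotProduct_add, hdiag, hquad, hRu, hL, hL]
    have h2 : (w + u) ⬝ᵥ A.mulVec (w + u)
        = w ⬝ᵥ A.mulVec w + 2 * (u ⬝ᵥ A.mulVec w) + u ⬝ᵥ A.mulVec u := by
      simp only [mulVec_add, dotProduct_add, add_dotProduct, hsym w u]
      ring
    rw [h2, dotProduct_add, dotProduct_add, dotProduct_smul, dotProduct_comm a u,
      hsym u w]
    simp only [smul_eq_mul]
    ring
  linarith [key ▸ h0]
end

section
/- Let d, n be positive integers, A a symmetric real d×d matrix, a ∈ ℝ^d, and L(w) = wᵀAw + aᵀw. Let w₀ ∈ ℝ^d, let (R_t)_{t≥0} be any sequence of real n×d matrices, and for each t let z*_t ∈ {0,1}^n be a minimizer of z ↦ zᵀ Q(w_t, R_t) z over {0,1}^n, where w_{t+1} = w_t + R_tᵀ z*_t and Q(w,R) = R A Rᵀ + diag[R(2Aw + a)]. Then the sequence of loss values is non-increasing: L(w_{t+1}) ≤ L(w_t) for all t ≥ 0; in particular L(w_t) ≤ L(w₀) for all t. -/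
open Matrix

lemma qcqo_diag_energy {n : ℕ} (v zz : Fin n → ℝ) (hz : ∀ i, zz i = 0 ∨ zz i = 1) :
    zz ⬝ᵥ (Matrix.diagonal v).mulVec zz = v ⬝ᵥ zz := by
  simp only [dotProduct, Matrix.mulVec_diagonal]
  refine Finset.sum_congr rfl fun i _ => ?_
  rcases hz i with h | h <;> simp [h]

/-- Along the QCQO iterates `w_{t+1} = w_t + R_tᵀ z*_t`, where `z*_t`
is a binary minimizer of the QUBO energy of `Q(w_t, R_t) = R_t A R_tᵀ + diag[R_t(2Aw_t + a)]`,
the loss values `L(w_t)` are non-increasing; in particular `L(w_t) ≤ L(w₀)` for all `t`. -/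
theorem qcqo_loss_antitone (d n : ℕ) (hd : 0 < d) (hn : 0 < n)
    (A : Matrix (Fin d) (Fin d) ℝ) (hA : A.IsSymm) (a : Fin d → ℝ)
    (L : (Fin d → ℝ) → ℝ)
    (hL : ∀ w, L w = w ⬝ᵥ A.mulVec w + a ⬝ᵥ w)
    (w : ℕ → Fin d → ℝ) (R : ℕ → Matrix (Fin n) (Fin d) ℝ)
    (Q : ℕ → Matrix (Fin n) (Fin n) ℝ)
    (hQ : ∀ t, Q t = R t * A * (R t)ᵀ +
      Matrix.diagonal ((R t).mulVec ((2 : ℝ) • A.mulVec (w t) + a)))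
    (z : ℕ → Fin n → ℝ) (hzbin : ∀ t i, z t i = 0 ∨ z t i = 1)
    (hzmin : ∀ t, ∀ y : Fin n → ℝ, (∀ i, y i = 0 ∨ y i = 1) →
      z t ⬝ᵥ (Q t).mulVec (z t) ≤ y ⬝ᵥ (Q t).mulVec y)
    (hstep : ∀ t, w (t + 1) = w t + (R t)ᵀ.mulVec (z t)) :
    (∀ t, L (w (t + 1)) ≤ L (w t)) ∧ (∀ t, L (w t) ≤ L (w 0)) := by
  have key : ∀ t, L (w (t + 1)) ≤ L (w t) := by
    intro t
    set u : Fin d → ℝ := (R t)ᵀ.mulVec (z t) with hu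
    -- energy identity : L (w t + u) = L (w t) + z ⬝ Q z
    have hsymm : ∀ x y : Fin d → ℝ, x ⬝ᵥ A.mulVec y = A.mulVec x ⬝ᵥ y := by
      intro x y
      rw [Matrix.dotProduct_mulVec]
      congr 1
      rw [← Matrix.mulVec_transpose, hA.eq]
    have hquad : u ⬝ᵥ A.mulVec u = z t ⬝ᵥ (R t * A * (R t)ᵀ).mulVec (z t) := by
      calc u ⬝ᵥ A.mulVec u = (z t ᵥ* R t) ⬝ᵥ (A * (R t)ᵀ).mulVec (z t) := by
            rw [hu, Matrix.mulVec_mulVec, Matrix.mulVec_transpose]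
        _ = z t ᵥ* (R t * (A * (R t)ᵀ)) ⬝ᵥ z t := by
            rw [Matrix.dotProduct_mulVec, Matrix.vecMul_vecMul]
        _ = z t ⬝ᵥ (R t * A * (R t)ᵀ).mulVec (z t) := by
            rw [Matrix.dotProduct_mulVec, Matrix.mul_assoc]
    have hlin : ((2 : ℝ) • A.mulVec (w t) + a) ⬝ᵥ u
        = ((R t).mulVec ((2 : ℝ) • A.mulVec (w t) + a)) ⬝ᵥ z t := by
      rw [hu, Matrix.dotProduct_mulVec, Matrix.vecMul_transpose]
    have hdiag := qcqo_diag_energy ((R t).mulVec ((2 : ℝ) • A.mulVec (w t) + a)) (z t) (hzbin t)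
    have h2 : w t ⬝ᵥ A.mulVec u = A.mulVec (w t) ⬝ᵥ u := hsymm (w t) u
    have h1 : u ⬝ᵥ A.mulVec (w t) = A.mulVec (w t) ⬝ᵥ u :=
      (hsymm u (w t)).trans ((dotProduct_comm _ _).trans h2)
    have henergy : L (w (t + 1)) = L (w t) + z t ⬝ᵥ (Q t).mulVec (z t) := by
      rw [hstep t, hL, hL, hQ t, ← hu]
      simp only [Matrix.add_mulVec, Matrix.mulVec_add, dotProduct_add,
        add_dotProduct, smul_dotProduct, smul_eq_mul] at hlin hdiag ⊢
      linarith [hquad, hlin, hdiag, h1, h2]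
    have hz0 : z t ⬝ᵥ (Q t).mulVec (z t) ≤ 0 := by
      have := hzmin t (fun _ => 0) (fun i => Or.inl rfl)
      simpa using this
    linarith [henergy, hz0]
  refine ⟨key, fun t => ?_⟩
  induction t with
  | zero => exact le_refl _
  | succ k ih => exact le_trans (key k) ih
end

section
/- Let N, d, n be positive integers, X a real N×d matrix, y ∈ ℝ^N, and define the mean squared error MSE(w) = (1/N)‖Xw − y‖₂² for w ∈ ℝ^d. Then for every w ∈ ℝ^d, every real n×d matrix R, and every binary vector z ∈ {0,1}^n: MSE(w + Rᵀz) = zᵀ Q_LR(w, R) z + MSE(w), where Q_LR(w, R) = (1/N)(R XᵀX Rᵀ + 2·diag[R Xᵀ(Xw − y)]) and diag[x] denotes the diagonal matrix with the entries of the vector x on its diagonal. -/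
open Matrix

/-- For linear regression with data `X ∈ ℝ^{N×d}`, targets `y ∈ ℝᴺ` and
mean squared error `MSE(w) = (1/N)‖Xw − y‖₂²`, for every `w`, every `n × d` matrix `R` and
every binary vector `z ∈ {0,1}ⁿ`:
`MSE(w + Rᵀz) = zᵀ Q_LR(w,R) z + MSE(w)`, where
`Q_LR(w,R) = (1/N)(R XᵀX Rᵀ + 2·diag[R Xᵀ(Xw − y)])`. -/
theorem qcqo_linear_regression_qubo (N d n : ℕ) (hN : 0 < N) (hd : 0 < d) (hn : 0 < n)
    (X : Matrix (Fin N) (Fin d) ℝ) (y : Fin N → ℝ)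
    (MSE : (Fin d → ℝ) → ℝ)
    (hMSE : ∀ w, MSE w = (1 / N : ℝ) * ((X.mulVec w - y) ⬝ᵥ (X.mulVec w - y)))
    (w : Fin d → ℝ) (R : Matrix (Fin n) (Fin d) ℝ)
    (Q : Matrix (Fin n) (Fin n) ℝ)
    (hQ : Q = (1 / N : ℝ) • (R * Xᵀ * X * Rᵀ +
      (2 : ℝ) • Matrix.diagonal (R.mulVec (Xᵀ.mulVec (X.mulVec w - y)))))
    (z : Fin n → ℝ) (hz : ∀ i, z i = 0 ∨ z i = 1) :
    MSE (w + Rᵀ.mulVec z) = z ⬝ᵥ Q.mulVec z + MSE w := by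
  set v : Fin N → ℝ := X.mulVec w - y with hv
  set u : Fin N → ℝ := X.mulVec (Rᵀ.mulVec z) with hu
  have h1 : X.mulVec (w + Rᵀ.mulVec z) - y = v + u := by
    rw [Matrix.mulVec_add]; rw [hv, hu]; abel
  have hu2 : u = (X * Rᵀ).mulVec z := by rw [hu, ← Matrix.mulVec_mulVec]
  have hquad : z ⬝ᵥ (R * Xᵀ * X * Rᵀ).mulVec z = u ⬝ᵥ u := by
    rw [Matrix.dotProduct_mulVec]
    have h2 : Matrix.vecMul z (R * Xᵀ) = u := by
      rw [hu2, ← Matrix.mulVec_transpose, Matrix.transpose_mul, Matrix.transpose_transpose]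
    have : Matrix.vecMul z (R * Xᵀ * X * Rᵀ) = Matrix.vecMul u (X * Rᵀ) := by
      rw [← h2, Matrix.vecMul_vecMul, Matrix.mul_assoc]
    rw [this, ← Matrix.dotProduct_mulVec, ← hu2]
  have hdiag : z ⬝ᵥ (Matrix.diagonal (R.mulVec (Xᵀ.mulVec v))).mulVec z = u ⬝ᵥ v := by
    have h3 : u ⬝ᵥ v = z ⬝ᵥ R.mulVec (Xᵀ.mulVec v) := by
      rw [Matrix.mulVec_mulVec, Matrix.dotProduct_mulVec, hu2,
        ← Matrix.mulVec_transpose, Matrix.transpose_mul, Matrix.transpose_transpose]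
    rw [h3]
    simp only [dotProduct, Matrix.mulVec_diagonal, Matrix.mulVec_mulVec]
    refine Finset.sum_congr rfl fun i _ => ?_
    rcases hz i with h | h <;> rw [h] <;> ring
  rw [hMSE, hMSE, h1, hQ]
  simp only [Matrix.smul_mulVec, Matrix.add_mulVec, dotProduct_add,
    dotProduct_smul, hquad, hdiag, smul_eq_mul]
  have hc : u ⬝ᵥ v = v ⬝ᵥ u := dotProduct_comm u v
  simp only [dotProduct_add, add_dotProduct, hc]
  ring
end
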